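/- Let r,s,t,u be integers with ru−st=1 and let φ₃ : G(r,s,t,u) → ℤ/2ℤ be the (unique) group homomorphism sending the generators a ↦ 0, b ↦ 0, c ↦ 1 (it exists since each relator has even exponent sum in c). Then the kernel of φ₃ is isomorphic, as an abstract group, to G(ru+st, 2su, −2rt, −(ru+st)). If instead ru−st=−1, the kernel of φ₃ is isomorphic to G(−(ru+st), −2su, 2rt, ru+st). -/

import Mathlib

/-!
Write `a, b, c` for the generators and `d = ru - st = ±1`. The relation `a b a⁻¹ = b⁻¹` makes the
elements `a^(2i) b^j` a copy of `ℤ²` (`torusElt a b i j`), on which conjugation by `c` fixes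
`(r, s)` and negates `(t, u)`. The kernel of `φ₃` is generated by `a`, `b` and `c a c⁻¹`, and these
satisfy the sapphire relations of `A' = A⁻¹ · diag(1, -1) · A`, which is the matrix of the claim.

For the converse, conjugation by `c` is mirrored by an endomorphism `θ` of `G(A')` with
`θ z = z` and `θ² = (z · _ · z⁻¹)`, where `z = a^(2r) b^s` plays the role of `c²`. These data give
a group structure on `G(A') × ℤ/2`, and `a, b ↦ (a, 0), (b, 0)`, `c ↦ (1, 1)` is an isomorphism
from `G(r, s, t, u)` onto it which turns `φ₃` into the projection to `ℤ/2`; its kernel is `G(A')`.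
-/

/-- The relators of the presentation of the fundamental group of the sapphire
Sol 3-manifold determined by the matrix `[[r, s], [t, u]]`:
`a·b·a⁻¹·b`, `c²·a^(−2r)·b^(−s)` and `c·a^(2t)·b^u·c⁻¹·a^(2t)·b^u`,
where `a, b, c` are the generators `of 0, of 1, of 2`. -/
def sapphireRels (r s t u : ℤ) : Set (FreeGroup (Fin 3)) :=
  { FreeGroup.of 0 * FreeGroup.of 1 * (FreeGroup.of 0)⁻¹ * FreeGroup.of 1,
    FreeGroup.of 2 ^ (2 : ℤ) * FreeGroup.of 0 ^ (-(2 * r)) * FreeGroup.of 1 ^ (-s),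
    FreeGroup.of 2 * FreeGroup.of 0 ^ (2 * t) * FreeGroup.of 1 ^ u * (FreeGroup.of 2)⁻¹ *
      FreeGroup.of 0 ^ (2 * t) * FreeGroup.of 1 ^ u }

/-- The fundamental group `G(r,s,t,u)` of the sapphire Sol 3-manifold. -/
abbrev SapphireGroup (r s t u : ℤ) := PresentedGroup (sapphireRels r s t u)

section Torus

variable {X : Type*} [Group X] {a b : X}

def torusElt (a b : X) (i j : ℤ) : X := a ^ (2 * i) * b ^ j

theorem map_torusElt {Y : Type*} [Group Y] (f : X →* Y) (a b : X) (i j : ℤ) :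
    f (torusElt a b i j) = torusElt (f a) (f b) i j := by
  simp [torusElt]

@[simp] theorem torusElt_zero_zero : torusElt a b 0 0 = 1 := by simp [torusElt]

@[simp] theorem torusElt_zero_one : torusElt a b 0 1 = b := by simp [torusElt]

@[simp] theorem torusElt_one_zero : torusElt a b 1 0 = a ^ 2 := by simp [torusElt]

theorem zpow_mul_eq_mul_zpow_neg (h : a * b * a⁻¹ = b⁻¹) (j : ℤ) : b ^ j * a = a * b ^ (-j) := by
  have : a * b ^ (-j) * a⁻¹ = b ^ j := by rw [← conj_zpow, h, inv_zpow', neg_neg]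
  rw [← this]; group

theorem commute_zpow_two_mul_zpow (h : a * b * a⁻¹ = b⁻¹) (i j : ℤ) :
    Commute (a ^ (2 * i)) (b ^ j) := by
  have hab : Commute (a ^ (2 : ℤ)) b := by
    have := zpow_mul_eq_mul_zpow_neg h 1
    simp only [zpow_one, zpow_neg] at this
    show a ^ (2 : ℤ) * b = b * a ^ (2 : ℤ)
    calc a ^ (2 : ℤ) * b = a * (a * b * a⁻¹) * a := by rw [zpow_two]; group
      _ = b * a ^ (2 : ℤ) := by rw [h, ← this, zpow_two, mul_assoc]
  rw [zpow_mul]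
  exact hab.zpow_zpow i j

theorem torusElt_mul (h : a * b * a⁻¹ = b⁻¹) (i j k l : ℤ) :
    torusElt a b i j * torusElt a b k l = torusElt a b (i + k) (j + l) := by
  simp only [torusElt, mul_add, zpow_add]
  rw [mul_assoc, ← mul_assoc (b ^ j), (commute_zpow_two_mul_zpow h k j).symm.eq]
  group

theorem torusElt_inv (h : a * b * a⁻¹ = b⁻¹) (i j : ℤ) :
    (torusElt a b i j)⁻¹ = torusElt a b (-i) (-j) :=
  inv_eq_of_mul_eq_one_right (by rw [torusElt_mul h]; simp)

theorem torusElt_zpow (h : a * b * a⁻¹ = b⁻¹) (i j n : ℤ) :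
    torusElt a b i j ^ n = torusElt a b (n * i) (n * j) := by
  induction n using Int.induction_on with
  | zero => simp
  | succ n ih => rw [zpow_add_one, ih, torusElt_mul h]; ring_nf
  | pred n ih => rw [zpow_sub_one, ih, torusElt_inv h, torusElt_mul h]; ring_nf

theorem mul_zpow_sq (h : a * b * a⁻¹ = b⁻¹) (k : ℤ) : (a * b ^ k) ^ 2 = a ^ 2 := by
  rw [sq, sq, mul_assoc, ← mul_assoc (b ^ k), zpow_mul_eq_mul_zpow_neg h]
  group

theorem torusElt_mul_mul_torusElt_inv (h : a * b * a⁻¹ = b⁻¹) (i j : ℤ) :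
    torusElt a b i j * a * (torusElt a b i j)⁻¹ = a * b ^ (-(2 * j)) := by
  have ha : Commute (a ^ (2 * i)) (a * b ^ (-(2 * j))) :=
    ((Commute.refl a).zpow_left _).mul_right (commute_zpow_two_mul_zpow h i _)
  calc torusElt a b i j * a * (torusElt a b i j)⁻¹
      = a ^ (2 * i) * (b ^ j * a * b ^ (-j)) * (a ^ (2 * i))⁻¹ := by simp only [torusElt]; group
    _ = a * b ^ (-(2 * j)) := by
      rw [zpow_mul_eq_mul_zpow_neg h, mul_assoc a, ← zpow_add, show -j + -j = -(2 * j) by ring,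
        ha.eq, mul_inv_cancel_right]

theorem torusElt_commute (h : a * b * a⁻¹ = b⁻¹) (i j k l : ℤ) :
    Commute (torusElt a b i j) (torusElt a b k l) := by
  rw [Commute, SemiconjBy, torusElt_mul h, torusElt_mul h, add_comm i, add_comm j]

theorem torusElt_commute_right (h : a * b * a⁻¹ = b⁻¹) (i j : ℤ) :
    Commute (torusElt a b i j) b := by
  simpa using torusElt_commute h i j 0 1

end Torus

structure SapphireRelations {X : Type*} [Group X] (r s t u : ℤ) (a b c : X) : Prop where
  klein : a * b * a⁻¹ = b⁻¹
  sq : c ^ 2 = torusElt a b r s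
  conj : c * torusElt a b t u * c⁻¹ = (torusElt a b t u)⁻¹

namespace SapphireRelations

variable {X : Type*} [Group X] {r s t u : ℤ} {a b c : X}

theorem map {Y : Type*} [Group Y] (h : SapphireRelations r s t u a b c) (f : X →* Y) :
    SapphireRelations r s t u (f a) (f b) (f c) where
  klein := by simpa only [map_mul, map_inv] using congrArg f h.klein
  sq := by simpa only [map_pow, map_torusElt] using congrArg f h.sq
  conj := by simpa only [map_mul, map_inv, map_torusElt] using congrArg f h.conj

theorem torusElt_eq_zpow_mul_zpow (h : SapphireRelations r s t u a b c) (α β : ℤ) :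
    torusElt a b (α * r + β * t) (α * s + β * u) = torusElt a b r s ^ α * torusElt a b t u ^ β := by
  rw [torusElt_zpow h.klein, torusElt_zpow h.klein, torusElt_mul h.klein]

theorem torusElt_c_torusElt (h : SapphireRelations r s t u a b c) (i j : ℤ) :
    torusElt c (torusElt a b t u) i j = torusElt a b (i * r + j * t) (i * s + j * u) := by
  rw [h.torusElt_eq_zpow_mul_zpow i j, ← h.sq]
  show c ^ (2 * i) * _ = _
  rw [zpow_mul, zpow_ofNat]

theorem conj_torusElt (h : SapphireRelations r s t u a b c) (α β : ℤ) :
    c * torusElt a b (α * r + β * t) (α * s + β * u) * c⁻¹ =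
      torusElt a b (α * r - β * t) (α * s - β * u) := by
  have hR : c * torusElt a b r s * c⁻¹ = torusElt a b r s := by rw [← h.sq]; group
  have hsplit : c * (torusElt a b r s ^ α * torusElt a b t u ^ β) * c⁻¹ =
      (c * torusElt a b r s * c⁻¹) ^ α * (c * torusElt a b t u * c⁻¹) ^ β := by
    rw [conj_zpow, conj_zpow]; group
  rw [torusElt_eq_zpow_mul_zpow h, hsplit, hR, h.conj, inv_zpow', sub_eq_add_neg, sub_eq_add_neg,
    ← neg_mul, ← neg_mul, torusElt_eq_zpow_mul_zpow h]

theorem torusElt_conj (h : SapphireRelations r s t u a b c) (α β : ℤ) :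
    torusElt a b (α * r + β * t) (α * s + β * u) * c *
        (torusElt a b (α * r + β * t) (α * s + β * u))⁻¹ =
      c * torusElt a b (-(2 * β * t)) (-(2 * β * u)) := by
  set Z := torusElt a b (α * r + β * t) (α * s + β * u)
  have hc2 : Commute (c ^ 2) Z := by
    rw [h.sq]; exact torusElt_commute h.klein _ _ _ _
  have hZc : c⁻¹ * Z * c = c * Z * c⁻¹ := by
    calc c⁻¹ * Z * c = c⁻¹ * (Z * c ^ 2) * c⁻¹ := by group
      _ = c * Z * c⁻¹ := by rw [← hc2.eq]; group
  calc Z * c * Z⁻¹ = c * (c⁻¹ * Z * c) * Z⁻¹ := by group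
    _ = c * torusElt a b (-(2 * β * t)) (-(2 * β * u)) := by
      rw [hZc, conj_torusElt h, torusElt_inv h.klein, mul_assoc, torusElt_mul h.klein]
      congr 2 <;> ring

variable {d : ℤ}

theorem conj_b (h : SapphireRelations r s t u a b c) (hdet : r * u - s * t = d) (hd : d * d = 1) :
    c * b * c⁻¹ = torusElt a b (-(2 * d * r * t)) (-(d * (r * u + s * t))) := by
  have e := h.conj_torusElt (-(d * t)) (d * r)
  rwa [show -(d * t) * r + d * r * t = 0 by ring,
    show -(d * t) * s + d * r * u = 1 by linear_combination d * hdet + hd,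
    show -(d * t) * r - d * r * t = -(2 * d * r * t) by ring,
    show -(d * t) * s - d * r * u = -(d * (r * u + s * t)) by ring, torusElt_zero_one] at e

theorem conj_sq_a (h : SapphireRelations r s t u a b c) (hdet : r * u - s * t = d)
    (hd : d * d = 1) : c * a ^ 2 * c⁻¹ = torusElt a b (d * (r * u + s * t)) (2 * d * s * u) := by
  have e := h.conj_torusElt (d * u) (-(d * s))
  rwa [show d * u * r + -(d * s) * t = 1 by linear_combination d * hdet + hd,
    show d * u * s + -(d * s) * u = 0 by ring,
    show d * u * r - -(d * s) * t = d * (r * u + s * t) by ring,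
    show d * u * s - -(d * s) * u = 2 * d * s * u by ring, torusElt_one_zero] at e

theorem kernel (h : SapphireRelations r s t u a b c) (hdet : r * u - s * t = d) (hd : d * d = 1) :
    SapphireRelations (d * (r * u + s * t)) (2 * d * s * u) (-(2 * d * r * t))
      (-(d * (r * u + s * t))) a b (c * a * c⁻¹) where
  klein := h.klein
  sq := by rw [conj_pow, h.conj_sq_a hdet hd]
  conj := by
    rw [← h.conj_b hdet hd]
    calc c * a * c⁻¹ * (c * b * c⁻¹) * (c * a * c⁻¹)⁻¹ = c * (a * b * a⁻¹) * c⁻¹ := by group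
      _ = (c * b * c⁻¹)⁻¹ := by rw [h.klein]; group

end SapphireRelations

namespace SapphireGroup

variable {r s t u : ℤ} {X : Type*} [Group X]

theorem lift_sapphireRels_iff {f : Fin 3 → X} :
    (∀ ρ ∈ sapphireRels r s t u, FreeGroup.lift f ρ = 1) ↔
      SapphireRelations r s t u (f 0) (f 1) (f 2) := by
  simp only [sapphireRels, Set.mem_insert_iff, Set.mem_singleton_iff, forall_eq_or_imp, forall_eq,
    map_mul, map_inv, map_zpow, FreeGroup.lift_apply_of]
  have e2 : ∀ i j : ℤ, f 2 ^ (2 : ℤ) * f 0 ^ (-(2 * i)) * f 1 ^ (-j) =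
      f 2 ^ 2 * torusElt (f 0) (f 1) (-i) (-j) := by
    intro i j; rw [torusElt, mul_neg, zpow_ofNat, mul_assoc]
  have e3 : f 2 * f 0 ^ (2 * t) * f 1 ^ u * (f 2)⁻¹ * f 0 ^ (2 * t) * f 1 ^ u =
      f 2 * torusElt (f 0) (f 1) t u * (f 2)⁻¹ * torusElt (f 0) (f 1) t u := by
    simp only [torusElt]; group
  simp only [e2, e3, mul_eq_one_iff_eq_inv]
  refine ⟨fun ⟨h1, h2, h3⟩ ↦ ⟨h1, ?_, h3⟩, fun h ↦ ⟨h.klein, ?_, h.conj⟩⟩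
  · rw [h2, torusElt_inv h1, neg_neg, neg_neg]
  · rw [h.sq, torusElt_inv h.klein, neg_neg, neg_neg]

theorem relations :
    SapphireRelations r s t u (.of 0 : SapphireGroup r s t u) (.of 1) (.of 2) := by
  have h : FreeGroup.lift (PresentedGroup.of (rels := sapphireRels r s t u)) =
      PresentedGroup.mk _ :=
    FreeGroup.ext_hom _ _ fun _ ↦ by simp; rfl
  exact lift_sapphireRels_iff.1 fun ρ hρ ↦ h ▸ PresentedGroup.one_of_mem hρ

def lift {a b c : X} (h : SapphireRelations r s t u a b c) : SapphireGroup r s t u →* X :=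
  PresentedGroup.toGroup (f := ![a, b, c]) (lift_sapphireRels_iff.2 h)

variable {a b c : X} (h : SapphireRelations r s t u a b c)

@[simp] theorem lift_of_zero : lift h (.of 0) = a := PresentedGroup.toGroup.of _
@[simp] theorem lift_of_one : lift h (.of 1) = b := PresentedGroup.toGroup.of _
@[simp] theorem lift_of_two : lift h (.of 2) = c := PresentedGroup.toGroup.of _

theorem hom_ext {f g : SapphireGroup r s t u →* X} (h0 : f (.of 0) = g (.of 0))
    (h1 : f (.of 1) = g (.of 1)) (h2 : f (.of 2) = g (.of 2)) : f = g :=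
  PresentedGroup.ext fun i ↦ by fin_cases i <;> assumption

end SapphireGroup

structure Z2ExtData (H : Type*) [Group H] where
  θ : H →* H
  z : H
  θ_z : θ z = z
  θ_θ : ∀ x, θ (θ x) = z * x * z⁻¹

-- `H × ℤ/2` with `(x, m) * (y, n) = (x · θ^m y · z^(mn), m + n)`: the extension of `ℤ/2` by `H`
-- in which the odd generator acts on `H` by `θ` and squares to `z`.
@[ext]
structure Z2Ext {H : Type*} [Group H] (D : Z2ExtData H) where
  val : H
  odd : Bool

namespace Z2Ext

variable {H : Type*} [Group H] {D : Z2ExtData H}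

instance : Mul (Z2Ext D) where
  mul p q := ⟨p.val * cond p.odd (D.θ q.val) q.val * cond (p.odd && q.odd) D.z 1, xor p.odd q.odd⟩

instance : One (Z2Ext D) := ⟨⟨1, false⟩⟩

instance : Inv (Z2Ext D) where
  inv p := ⟨cond p.odd (D.θ (D.z⁻¹ * p.val⁻¹)) p.val⁻¹, p.odd⟩

theorem mul_def (p q : Z2Ext D) :
    p * q = ⟨p.val * cond p.odd (D.θ q.val) q.val * cond (p.odd && q.odd) D.z 1, xor p.odd q.odd⟩ :=
  rfl

theorem one_def : (1 : Z2Ext D) = ⟨1, false⟩ := rfl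

theorem inv_def (p : Z2Ext D) : p⁻¹ = ⟨cond p.odd (D.θ (D.z⁻¹ * p.val⁻¹)) p.val⁻¹, p.odd⟩ := rfl

instance : Group (Z2Ext D) := Group.ofLeftAxioms
  (by rintro ⟨x, _ | _⟩ ⟨y, _ | _⟩ ⟨w, _ | _⟩ <;> simp [mul_def, D.θ_θ, D.θ_z] <;> group)
  (by rintro ⟨x, _ | _⟩ <;> simp [mul_def, one_def])
  (by rintro ⟨x, _ | _⟩ <;> simp [mul_def, inv_def, one_def, D.θ_z])

def inl : H →* Z2Ext D where
  toFun x := ⟨x, false⟩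
  map_one' := rfl
  map_mul' x y := by simp [mul_def]

def gen : Z2Ext D := ⟨1, true⟩

theorem inl_injective : Function.Injective (inl : H →* Z2Ext D) :=
  fun _ _ h ↦ congrArg val h

theorem gen_mul_inl_mul_gen_inv (x : H) : gen * inl x * gen⁻¹ = (inl (D.θ x) : Z2Ext D) := by
  simp [gen, inl, mul_def, inv_def, D.θ_z]

theorem gen_sq : (gen : Z2Ext D) ^ 2 = inl D.z := by
  simp [sq, gen, inl, mul_def]

theorem mk_eq_inl_mul (x : H) (m : Bool) : (⟨x, m⟩ : Z2Ext D) = inl x * cond m gen 1 := by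
  cases m <;> simp [gen, inl, mul_def, one_def]

def parity : Z2Ext D →* Multiplicative (ZMod 2) where
  toFun p := Multiplicative.ofAdd (cond p.odd 1 0)
  map_one' := rfl
  map_mul' := by rintro ⟨x, _ | _⟩ ⟨y, _ | _⟩ <;> simp only [mul_def] <;> rfl

@[simp] theorem parity_inl (x : H) : parity (inl x : Z2Ext D) = 1 := rfl

@[simp] theorem parity_gen : parity (gen : Z2Ext D) = Multiplicative.ofAdd 1 := rfl

theorem ker_parity : (parity : Z2Ext D →* _).ker = inl.range := by
  ext ⟨x, m⟩
  cases m
  · exact ⟨fun _ ↦ ⟨x, rfl⟩, fun _ ↦ rfl⟩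
  · simp [parity, inl]

noncomputable def kerParityEquiv : (parity : Z2Ext D →* _).ker ≃* H :=
  (MulEquiv.subgroupCongr ker_parity).trans (MonoidHom.ofInjective inl_injective).symm

variable {X : Type*} [Group X]

def lift (f : H →* X) (g : X) (hθ : ∀ x, f (D.θ x) = g * f x * g⁻¹) (hz : f D.z = g ^ 2) :
    Z2Ext D →* X where
  toFun p := f p.val * cond p.odd g 1
  map_one' := by simp [one_def]
  map_mul' := by rintro ⟨x, _ | _⟩ ⟨y, _ | _⟩ <;> simp [mul_def, hθ, hz] <;> group

variable {f : H →* X} {g : X} {hθ : ∀ x, f (D.θ x) = g * f x * g⁻¹} {hz : f D.z = g ^ 2}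

@[simp] theorem lift_inl (x : H) : lift f g hθ hz (inl x) = f x := by simp [lift, inl]

theorem lift_comp_inl : (lift f g hθ hz).comp inl = f := MonoidHom.ext fun _ ↦ by simp

@[simp] theorem lift_gen : lift f g hθ hz gen = g := by simp [lift, gen]

theorem hom_ext {φ ψ : Z2Ext D →* X} (hinl : φ.comp inl = ψ.comp inl) (hgen : φ gen = ψ gen) :
    φ = ψ := by
  ext ⟨x, m⟩
  rw [mk_eq_inl_mul, map_mul, map_mul]
  congr 1
  · exact DFunLike.congr_fun hinl x
  · cases m <;> simp [hgen]

end Z2Ext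

namespace SapphireGroup

variable {r s t u : ℤ}

-- Models conjugation by `C` on the subgroup generated by `a`, `b`, `c = C a C⁻¹` of a sapphire
-- group with generators `a, b, C`: `a ↦ c`, `b ↦ C b C⁻¹ = a^(2t) b^u`, `c ↦ C² a C⁻² = a b^(-2n)`.
theorem twist_relations (n : ℤ) (htr : r + u = 0) (hdet : r * u - s * t = -1) :
    SapphireRelations r s t u (.of 2 : SapphireGroup r s t u) (torusElt (.of 0) (.of 1) t u)
      (.of 0 * .of 1 ^ (-(2 * n))) where
  klein := relations.conj
  sq := by
    rw [mul_zpow_sq relations.klein, relations.torusElt_c_torusElt,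
      show r * r + s * t = 1 by linear_combination r * htr - hdet,
      show r * s + s * u = 0 by linear_combination s * htr, torusElt_one_zero]
  conj := by
    rw [relations.torusElt_c_torusElt, show t * r + u * t = 0 by linear_combination t * htr,
      show t * s + u * u = 1 by linear_combination u * htr - hdet, torusElt_zero_one,
      ← relations.klein]
    group

def twist (n : ℤ) (htr : r + u = 0) (hdet : r * u - s * t = -1) :
    SapphireGroup r s t u →* SapphireGroup r s t u :=
  lift (twist_relations n htr hdet)

variable {n : ℤ} {htr : r + u = 0} {hdet : r * u - s * t = -1}

@[simp] theorem twist_of_zero : twist n htr hdet (.of 0) = .of 2 := lift_of_zero _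

@[simp] theorem twist_of_one : twist n htr hdet (.of 1) = torusElt (.of 0) (.of 1) t u :=
  lift_of_one _

@[simp] theorem twist_of_two : twist n htr hdet (.of 2) = .of 0 * .of 1 ^ (-(2 * n)) :=
  lift_of_two _

theorem twist_torusElt (p q : ℤ) :
    twist n htr hdet (torusElt (.of 0) (.of 1) p q) =
      torusElt (.of 0) (.of 1) (p * r + q * t) (p * s + q * u) := by
  rw [map_torusElt, twist_of_zero, twist_of_one, relations.torusElt_c_torusElt]

theorem twist_twist (p : ℤ) (hp : p * r + n * t = p) (hn : p * s + n * u = n)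
    (x : SapphireGroup r s t u) :
    twist n htr hdet (twist n htr hdet x) =
      torusElt (.of 0) (.of 1) p n * x * (torusElt (.of 0) (.of 1) p n)⁻¹ := by
  have h := relations (r := r) (s := s) (t := t) (u := u)
  have hz : torusElt (.of 0 : SapphireGroup r s t u) (.of 1) p n =
      torusElt (.of 0) (.of 1) (p * r + n * t) (p * s + n * u) := by rw [hp, hn]
  suffices (twist n htr hdet).comp (twist n htr hdet) =
      (MulAut.conj (torusElt (.of 0 : SapphireGroup r s t u) (.of 1) p n)).toMonoidHom from
    DFunLike.congr_fun this x
  refine hom_ext ?_ ?_ ?_ <;> simp only [MonoidHom.comp_apply, twist_of_zero, twist_of_one,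
    twist_of_two, MulEquiv.coe_toMonoidHom, MulAut.conj_apply]
  · rw [torusElt_mul_mul_torusElt_inv h.klein]
  · rw [twist_torusElt, show t * r + u * t = 0 by linear_combination t * htr,
      show t * s + u * u = 1 by linear_combination u * htr - hdet, torusElt_zero_one,
      (torusElt_commute_right h.klein p n).eq, mul_inv_cancel_right]
  · rw [map_mul, map_zpow, twist_of_zero, twist_of_one, hz, h.torusElt_conj,
      torusElt_zpow h.klein]
    ring_nf

end SapphireGroup

-- `G(A')` for `A' = A⁻¹ · diag(1, -1) · A`, using `A⁻¹ = d · adj A` when `d = det A = ±1`.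
abbrev KernelGroup (r s t u d : ℤ) :=
  SapphireGroup (d * (r * u + s * t)) (2 * d * s * u) (-(2 * d * r * t)) (-(d * (r * u + s * t)))

namespace KernelGroup

open SapphireGroup

variable {r s t u d : ℤ}

theorem row_fixed (hdet : r * u - s * t = d) (hd : d * d = 1) :
    r * (d * (r * u + s * t)) + s * -(2 * d * r * t) = r ∧
      r * (2 * d * s * u) + s * -(d * (r * u + s * t)) = s :=
  ⟨by linear_combination (r * d) * hdet + r * hd, by linear_combination (s * d) * hdet + s * hd⟩

def extData (hdet : r * u - s * t = d) (hd : d * d = 1) : Z2ExtData (KernelGroup r s t u d) where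
  θ := twist s (by ring)
    (by linear_combination (-(d ^ 2) * (r * u - s * t + d)) * hdet - (d ^ 2 + 1) * hd)
  z := torusElt (.of 0) (.of 1) r s
  θ_z := by rw [twist_torusElt, (row_fixed hdet hd).1, (row_fixed hdet hd).2]
  θ_θ := twist_twist r (row_fixed hdet hd).1 (row_fixed hdet hd).2

variable (hdet : r * u - s * t = d) (hd : d * d = 1)

theorem relations_in_ext :
    SapphireRelations r s t u (Z2Ext.inl (.of 0) : Z2Ext (extData hdet hd)) (Z2Ext.inl (.of 1))
      Z2Ext.gen where
  klein := (relations.map Z2Ext.inl).klein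
  sq := by rw [Z2Ext.gen_sq, ← map_torusElt]; rfl
  conj := by
    rw [← map_torusElt, Z2Ext.gen_mul_inl_mul_gen_inv, ← map_inv, torusElt_inv relations.klein]
    simp only [extData]
    rw [twist_torusElt]
    congr 2
    · linear_combination (-(t * d)) * hdet - t * hd
    · linear_combination (-(u * d)) * hdet - u * hd

def toExt : SapphireGroup r s t u →* Z2Ext (extData hdet hd) := lift (relations_in_ext hdet hd)

def incl : KernelGroup r s t u d →* SapphireGroup r s t u := lift (relations.kernel hdet hd)

theorem incl_twist (x : KernelGroup r s t u d) :
    incl hdet hd ((extData hdet hd).θ x) = .of 2 * incl hdet hd x * (.of 2)⁻¹ := by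
  have h := relations (r := r) (s := s) (t := t) (u := u)
  suffices (incl hdet hd).comp (extData hdet hd).θ =
      (MulAut.conj (.of 2 : SapphireGroup r s t u)).toMonoidHom.comp (incl hdet hd) from
    DFunLike.congr_fun this x
  refine hom_ext ?_ ?_ ?_ <;> simp only [extData, incl, MonoidHom.comp_apply, twist_of_zero,
    twist_of_one, twist_of_two, lift_of_zero, lift_of_one, lift_of_two, MulEquiv.coe_toMonoidHom,
    MulAut.conj_apply]
  · rw [map_torusElt, lift_of_zero, lift_of_one, h.conj_b hdet hd]
  · rw [map_mul, map_zpow, lift_of_zero, lift_of_one, ← torusElt_mul_mul_torusElt_inv h.klein r s,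
      ← h.sq, sq]
    group

theorem incl_z : incl hdet hd (extData hdet hd).z = .of 2 ^ 2 := by
  simp only [extData, incl, map_torusElt, lift_of_zero, lift_of_one, relations.sq]

def ofExt : Z2Ext (extData hdet hd) →* SapphireGroup r s t u :=
  Z2Ext.lift (incl hdet hd) (.of 2) (incl_twist hdet hd) (incl_z hdet hd)

theorem toExt_comp_incl : (toExt hdet hd).comp (incl hdet hd) = Z2Ext.inl := by
  refine hom_ext (by simp [toExt, incl]) (by simp [toExt, incl]) ?_
  simp only [toExt, incl, MonoidHom.comp_apply, lift_of_two, map_mul, map_inv, lift_of_zero,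
    Z2Ext.gen_mul_inl_mul_gen_inv]
  simp [extData]

def equivExt : SapphireGroup r s t u ≃* Z2Ext (extData hdet hd) :=
  (toExt hdet hd).toMulEquiv (ofExt hdet hd)
    (hom_ext (by simp [toExt, ofExt, incl]) (by simp [toExt, ofExt, incl])
      (by simp [toExt, ofExt]))
    (Z2Ext.hom_ext (by rw [MonoidHom.comp_assoc, ofExt, Z2Ext.lift_comp_inl, toExt_comp_incl]; rfl)
      (by simp [toExt, ofExt]))

end KernelGroup

def MonoidHom.kerCompMulEquiv {G G' M : Type*} [Group G] [Group G'] [Group M] (π : G' →* M)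
    (e : G ≃* G') : (π.comp e.toMonoidHom).ker ≃* π.ker :=
  (e.subgroupMap _).trans (MulEquiv.subgroupCongr (by
    rw [← MonoidHom.comap_ker]; exact Subgroup.map_comap_eq_self_of_surjective e.surjective _))

theorem nonempty_ker_equiv {r s t u d r' s' t' u' : ℤ} (hdet : r * u - s * t = d)
    (hd : d * d = 1) (hr' : r' = d * (r * u + s * t)) (hs' : s' = 2 * d * s * u)
    (ht' : t' = -(2 * d * r * t)) (hu' : u' = -(d * (r * u + s * t)))
    (φ : SapphireGroup r s t u →* Multiplicative (ZMod 2))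
    (ha : φ (PresentedGroup.of 0) = Multiplicative.ofAdd (0 : ZMod 2))
    (hb : φ (PresentedGroup.of 1) = Multiplicative.ofAdd (0 : ZMod 2))
    (hc : φ (PresentedGroup.of 2) = Multiplicative.ofAdd (1 : ZMod 2)) :
    Nonempty (φ.ker ≃* SapphireGroup r' s' t' u') := by
  subst hr' hs' ht' hu'
  have hφ : φ = Z2Ext.parity.comp (KernelGroup.equivExt hdet hd).toMonoidHom :=
    SapphireGroup.hom_ext (by simp [ha, KernelGroup.equivExt, KernelGroup.toExt])
      (by simp [hb, KernelGroup.equivExt, KernelGroup.toExt])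
      (by simp [hc, KernelGroup.equivExt, KernelGroup.toExt])
  subst hφ
  exact ⟨(MonoidHom.kerCompMulEquiv _ _).trans Z2Ext.kerParityEquiv⟩

theorem stmt2 (r s t u : ℤ)
    (φ : SapphireGroup r s t u →* Multiplicative (ZMod 2))
    (ha : φ (PresentedGroup.of 0) = Multiplicative.ofAdd (0 : ZMod 2))
    (hb : φ (PresentedGroup.of 1) = Multiplicative.ofAdd (0 : ZMod 2))
    (hc : φ (PresentedGroup.of 2) = Multiplicative.ofAdd (1 : ZMod 2)) :
    (r * u - s * t = 1 →
      Nonempty (φ.ker ≃*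
        SapphireGroup (r * u + s * t) (2 * s * u) (-(2 * r * t)) (-(r * u + s * t)))) ∧
    (r * u - s * t = -1 →
      Nonempty (φ.ker ≃*
        SapphireGroup (-(r * u + s * t)) (-(2 * s * u)) (2 * r * t) (r * u + s * t))) :=
  ⟨fun hdet ↦ nonempty_ker_equiv hdet (by norm_num) (by ring) (by ring) (by ring) (by ring)
      φ ha hb hc,
    fun hdet ↦ nonempty_ker_equiv hdet (by norm_num) (by ring) (by ring) (by ring) (by ring)
      φ ha hb hc⟩
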